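/- arXiv:2604.14677 — 2 statements merged into one kernel-verified Lean document; each statement's English description precedes it below -/
import Mathlib

section
/- Let Λ ⊂ ℝ³ be the lattice generated by the vectors v₁ = (4+δ, 0, 0), v₂ = (−(2+δ/2), 2√3, 0), v₃ = (−(2+δ/2), 0, 2√3), where δ > 0. Then the Euclidean distance between any two distinct points of Λ is strictly greater than 4. -/
open Real

/-- The `i`-th standard basis vector of `ℝ³`. -/
noncomputable def e3 (i : Fin 3) : EuclideanSpace ℝ (Fin 3) := EuclideanSpace.single i 1

/-- The generating vectors `v₁ = (4+δ)e₁`, `vᵢ = −(2+δ/2)e₁ + 2√3 eᵢ` for `i = 2,3`. -/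
noncomputable def lamV (δ : ℝ) (i : Fin 3) : EuclideanSpace ℝ (Fin 3) :=
  if i = 0 then (4 + δ) • e3 0
  else (-(2 + δ / 2)) • e3 0 + (2 * Real.sqrt 3) • e3 i

/-- The lattice `Λ` generated by `v₁, v₂, v₃`. -/
noncomputable def latticeΛ (δ : ℝ) : Set (EuclideanSpace ℝ (Fin 3)) :=
  {p | ∃ a b c : ℤ, p = (a : ℝ) • lamV δ 0 + (b : ℝ) • lamV δ 1 + (c : ℝ) • lamV δ 2}

set_option maxHeartbeats 1000000 in
lemma key_ineq (δ : ℝ) (hδ : 0 < δ) (a b c : ℤ) (h : ¬ (a = 0 ∧ b = 0 ∧ c = 0)) :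
    4 < ‖(a : ℝ) • lamV δ 0 + (b : ℝ) • lamV δ 1 + (c : ℝ) • lamV δ 2‖ := by
  set w := (a : ℝ) • lamV δ 0 + (b : ℝ) • lamV δ 1 + (c : ℝ) • lamV δ 2 with hw
  have h0 : w 0 = (2 + δ/2) * (2 * a - b - c) := by
    simp [hw, lamV, e3, EuclideanSpace.single_apply]; ring
  have h1 : w 1 = (2 * Real.sqrt 3) * b := by
    simp [hw, lamV, e3, EuclideanSpace.single_apply]; ring
  have h2 : w 2 = (2 * Real.sqrt 3) * c := by
    simp [hw, lamV, e3, EuclideanSpace.single_apply]; ring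
  have hnorm : ‖w‖ = Real.sqrt (w 0 ^ 2 + w 1 ^ 2 + w 2 ^ 2) := by
    rw [EuclideanSpace.norm_eq]
    congr 1
    rw [Fin.sum_univ_three]
    simp [Real.norm_eq_abs, sq_abs]
  rw [hnorm]
  rw [show (4:ℝ) = Real.sqrt 16 by
    rw [show (16:ℝ) = 4^2 by norm_num, Real.sqrt_sq (by norm_num)]]
  apply Real.sqrt_lt_sqrt (by norm_num)
  rw [h0, h1, h2]
  have h3 : Real.sqrt 3 ^ 2 = 3 := Real.sq_sqrt (by norm_num)
  have hy : (2 * Real.sqrt 3 * (b:ℝ)) ^ 2 = 12 * (b:ℝ) ^ 2 := by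
    rw [show (2 * Real.sqrt 3 * (b:ℝ)) ^ 2 = 4 * Real.sqrt 3 ^ 2 * (b:ℝ) ^ 2 from by ring, h3]
    ring
  have hz : (2 * Real.sqrt 3 * (c:ℝ)) ^ 2 = 12 * (c:ℝ) ^ 2 := by
    rw [show (2 * Real.sqrt 3 * (c:ℝ)) ^ 2 = 4 * Real.sqrt 3 ^ 2 * (c:ℝ) ^ 2 from by ring, h3]
    ring
  rw [hy, hz]
  have hA : (4:ℝ) < (2 + δ/2) ^ 2 := by nlinarith
  by_cases hbc : b = 0 ∧ c = 0
  · obtain ⟨hb, hc⟩ := hbc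
    have ha : a ≠ 0 := by tauto
    have ha1 : 1 ≤ a ^ 2 := by
      have := Int.one_le_abs ha
      nlinarith [sq_abs a]
    have ha1' : (1:ℝ) ≤ (a:ℝ) ^ 2 := by exact_mod_cast ha1
    subst hb hc
    push_cast
    nlinarith [hA, ha1']
  · by_cases hm : b ^ 2 + c ^ 2 = 1
    · -- t := 2a - b - c is odd
      have hodd : Odd (2 * a - b - c) := by
        rcases Int.even_or_odd b with hb | hb <;> rcases Int.even_or_odd c with hc | hc
        · exfalso
          obtain ⟨k, hk⟩ := hb; obtain ⟨l, hl⟩ := hc; subst hk hl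
          have : Even ((k + k) ^ 2 + (l + l) ^ 2) := ⟨2 * k ^ 2 + 2 * l ^ 2, by ring⟩
          rw [hm] at this
          have h12 := Int.even_iff.mp this; omega
        · obtain ⟨k, hk⟩ := hb; obtain ⟨l, hl⟩ := hc; exact ⟨a - k - l - 1, by omega⟩
        · obtain ⟨k, hk⟩ := hb; obtain ⟨l, hl⟩ := hc; exact ⟨a - k - l - 1, by omega⟩
        · exfalso
          obtain ⟨k, hk⟩ := hb; obtain ⟨l, hl⟩ := hc; subst hk hl
          have : Even ((2 * k + 1) ^ 2 + (2 * l + 1) ^ 2) :=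
            ⟨2 * k ^ 2 + 2 * k + 2 * l ^ 2 + 2 * l + 1, by ring⟩
          rw [hm] at this
          have h12 := Int.even_iff.mp this; omega
      have ht0 : 2 * a - b - c ≠ 0 := by
        rcases hodd with ⟨k, hk⟩; omega
      have ht1 : 1 ≤ (2 * a - b - c) ^ 2 := by
        have := Int.one_le_abs ht0
        nlinarith [sq_abs (2 * a - b - c)]
      have ht1' : (1:ℝ) ≤ ((2:ℝ) * a - b - c) ^ 2 := by exact_mod_cast ht1
      have hm' : ((b:ℝ)) ^ 2 + (c:ℝ) ^ 2 = 1 := by exact_mod_cast hm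
      nlinarith [hA, ht1', hm']
    · have hge1 : 1 ≤ b ^ 2 + c ^ 2 := by
        rcases not_and_or.mp hbc with hb | hc
        · have := Int.one_le_abs hb
          nlinarith [sq_abs b, sq_nonneg c]
        · have := Int.one_le_abs hc
          nlinarith [sq_abs c, sq_nonneg b]
      have hge2 : 2 ≤ b ^ 2 + c ^ 2 := by
        rcases lt_or_eq_of_le hge1 with h' | h'
        · omega
        · exact absurd h'.symm hm
      have hge2' : (2:ℝ) ≤ (b:ℝ) ^ 2 + (c:ℝ) ^ 2 := by exact_mod_cast hge2
      nlinarith [sq_nonneg ((2 + δ/2) * (2 * (a:ℝ) - b - c)), hge2']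

/-- any two distinct points of `Λ` are at Euclidean distance `> 4`. -/
theorem lattice_min_dist (δ : ℝ) (hδ : 0 < δ)
    (p q : EuclideanSpace ℝ (Fin 3)) (hp : p ∈ latticeΛ δ) (hq : q ∈ latticeΛ δ)
    (hpq : p ≠ q) : 4 < dist p q := by
  obtain ⟨a, b, c, hpe⟩ := hp
  obtain ⟨a', b', c', hqe⟩ := hq
  have hdiff : p - q = ((a - a' : ℤ) : ℝ) • lamV δ 0 + ((b - b' : ℤ) : ℝ) • lamV δ 1 +
      ((c - c' : ℤ) : ℝ) • lamV δ 2 := by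
    rw [hpe, hqe]
    push_cast
    module
  have hne : ¬ (a - a' = 0 ∧ b - b' = 0 ∧ c - c' = 0) := by
    rintro ⟨h1, h2, h3⟩
    apply hpq
    rw [hpe, hqe]
    have : a = a' := by omega
    have : b = b' := by omega
    have : c = c' := by omega
    subst_vars; rfl
  have := key_ineq δ hδ _ _ _ hne
  rwa [dist_eq_norm, hdiff]
end

section
/- Let Λ ⊂ ℝ³ be the lattice generated by v₁ = (4+δ)e₁, v₂ = −(2+δ/2)e₁ + 2√3 e₂, v₃ = −(2+δ/2)e₁ + 2√3 e₃ (δ > 0), and let U = ⋃_{p∈Λ} B(p,1) be the union of closed unit balls centered at lattice points. For any l ∈ ℝ³, let R = [l₁, l₁+4+δ] × [l₂, l₂+2√3] × [l₃, l₃+2√3]. Then the Lebesgue measure (volume) of R ∩ U equals the volume of a unit ball, i.e., 4π/3. -/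
open Real Metric MeasureTheory


/-!
The half-open box `R' = [l₁, l₁+4+δ) × [l₂, l₂+2√3) × [l₃, l₃+2√3)` is a fundamental domain of `Λ`:
the last two coordinates of a lattice point are `2√3 b` and `2√3 c`, and once `b, c` are fixed
the first one runs through a coset of `(4+δ)ℤ`. Nonzero lattice points have norm `> 2`, so the
translates `p + B(0,1)` are disjoint, and cutting `B(0,1)` along the tiling `{R' - p}` gives
`vol B(0,1) = ∑ₚ vol ((R' - p) ∩ B(0,1)) = ∑ₚ vol (R' ∩ B(p,1)) = vol (R' ∩ U)`.
The closed box differs from `R'` by a null set.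
-/

open Set Function Pointwise

theorem MeasureTheory.IsAddFundamentalDomain.measure_inter_iUnion_vadd {G α : Type*}
    [AddGroup G] [Countable G] [AddAction G α] [MeasurableSpace α] [MeasurableConstVAdd G α]
    {μ : Measure α} [VAddInvariantMeasure G α μ] {s t : Set α}
    (hs : IsAddFundamentalDomain G s μ) (ht : NullMeasurableSet t μ)
    (hd : Pairwise (AEDisjoint μ on fun g : G => g +ᵥ t)) :
    μ (s ∩ ⋃ g : G, g +ᵥ t) = μ t :=
  calc μ (s ∩ ⋃ g : G, g +ᵥ t) = μ (⋃ g : G, (g +ᵥ t) ∩ s) := by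
        rw [inter_comm, iUnion_inter]
    _ = ∑' g : G, μ ((g +ᵥ t) ∩ s) :=
        measure_iUnion₀ (hd.mono fun _ _ h => h.mono inter_subset_left inter_subset_left)
          fun _ => (ht.vadd _).inter hs.nullMeasurableSet
    _ = μ t := (hs.measure_eq_tsum t).symm

theorem EuclideanSpace.setOf_forall_Ico_ae_eq_Icc {ι : Type*} [Fintype ι] (l u : ι → ℝ) :
    {x : EuclideanSpace ℝ ι | ∀ i, x i ∈ Ico (l i) (u i)} =ᵐ[volume]
      {x : EuclideanSpace ℝ ι | ∀ i, x i ∈ Icc (l i) (u i)} := by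
  have := (PiLp.volume_preserving_ofLp ι).quasiMeasurePreserving.preimage_ae_eq
    (Measure.univ_pi_Ico_ae_eq_Icc (f := l) (g := u))
  rw [← pi_univ_Icc] at this
  simpa only [preimage, mem_univ_pi] using this

lemma abs_sub_lt_of_mem_Ico {a b l w : ℝ} (ha : a ∈ Ico l (l + w)) (hb : b ∈ Ico l (l + w)) :
    |a - b| < w := by
  rw [abs_sub_lt_iff]
  constructor <;> linarith [ha.1, ha.2, hb.1, hb.2]

lemma Int.eq_zero_of_abs_mul_lt {w : ℝ} {n : ℤ} (h : |w * n| < w) : n = 0 := by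
  by_contra hn
  have : (1 : ℝ) ≤ |(n : ℝ)| := by exact_mod_cast Int.one_le_abs hn
  rw [abs_mul] at h
  nlinarith [le_abs_self w, abs_nonneg w]

namespace latticeΛ

variable {δ : ℝ}

lemma lamV_combination (a b c : ℝ) :
    a • lamV δ 0 + b • lamV δ 1 + c • lamV δ 2 =
      !₂[(4 + δ) * a - (2 + δ / 2) * (b + c), 2 * √3 * b, 2 * √3 * c] := by
  ext i
  fin_cases i <;> simp [lamV, e3] <;> ring

noncomputable def addSubgroup (δ : ℝ) : AddSubgroup (EuclideanSpace ℝ (Fin 3)) where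
  carrier := latticeΛ δ
  add_mem' := by
    rintro _ _ ⟨a, b, c, rfl⟩ ⟨a', b', c', rfl⟩
    exact ⟨a + a', b + b', c + c', by push_cast; module⟩
  zero_mem' := ⟨0, 0, 0, by simp⟩
  neg_mem' := by
    rintro _ ⟨a, b, c, rfl⟩
    exact ⟨-a, -b, -c, by push_cast; module⟩

instance (δ : ℝ) : Countable (addSubgroup δ) := by
  refine Set.Countable.to_subtype ((countable_range fun v : ℤ × ℤ × ℤ =>
    (v.1 : ℝ) • lamV δ 0 + (v.2.1 : ℝ) • lamV δ 1 + (v.2.2 : ℝ) • lamV δ 2).mono ?_)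
  rintro _ ⟨a, b, c, rfl⟩
  exact ⟨(a, b, c), rfl⟩

noncomputable def boxWidth (δ : ℝ) : Fin 3 → ℝ := ![4 + δ, 2 * √3, 2 * √3]

def halfOpenBox (δ : ℝ) (l : Fin 3 → ℝ) : Set (EuclideanSpace ℝ (Fin 3)) :=
  {x | ∀ i, x i ∈ Ico (l i) (l i + boxWidth δ i)}

lemma measurableSet_halfOpenBox (δ : ℝ) (l : Fin 3 → ℝ) : MeasurableSet (halfOpenBox δ l) := by
  simp only [halfOpenBox, ofPred_forall]
  exact .iInter fun i =>
    measurableSet_Ico.preimage ((measurable_pi_apply i).comp (WithLp.measurable_ofLp _ _))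

lemma eq_zero_of_abs_lt_boxWidth {p : EuclideanSpace ℝ (Fin 3)} (hp : p ∈ latticeΛ δ)
    (h : ∀ i, |p i| < boxWidth δ i) : p = 0 := by
  obtain ⟨a, b, c, rfl⟩ := hp
  have h0 := h 0
  have h1 := h 1
  have h2 := h 2
  simp only [lamV_combination, boxWidth, Matrix.cons_val] at h0 h1 h2
  obtain rfl : c = 0 := Int.eq_zero_of_abs_mul_lt h2
  obtain rfl : b = 0 := Int.eq_zero_of_abs_mul_lt h1
  obtain rfl : a = 0 := Int.eq_zero_of_abs_mul_lt
    (by simpa only [Int.cast_zero, add_zero, mul_zero, sub_zero] using h0)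
  simp

lemma exists_add_mem_halfOpenBox (hδ : 0 < δ) (l : Fin 3 → ℝ) (x : EuclideanSpace ℝ (Fin 3)) :
    ∃ p ∈ latticeΛ δ, p + x ∈ halfOpenBox δ l := by
  have hw : 0 < 2 * √3 := by positivity
  obtain ⟨c, hc⟩ := (existsUnique_add_zsmul_mem_Ico hw (x 2) (l 2)).exists
  obtain ⟨b, hb⟩ := (existsUnique_add_zsmul_mem_Ico hw (x 1) (l 1)).exists
  obtain ⟨a, ha⟩ := (existsUnique_add_zsmul_mem_Ico (by linarith : 0 < 4 + δ)
    (x 0 - (2 + δ / 2) * (b + c)) (l 0)).exists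
  refine ⟨_, ⟨a, b, c, rfl⟩, ?_⟩
  rw [lamV_combination]
  intro i
  fin_cases i
  · convert ha using 1 <;> simp [boxWidth]; ring
  · convert hb using 1 <;> simp [boxWidth]; ring
  · convert hc using 1 <;> simp [boxWidth]; ring

theorem isAddFundamentalDomain_halfOpenBox (hδ : 0 < δ) (l : Fin 3 → ℝ) :
    IsAddFundamentalDomain (addSubgroup δ) (halfOpenBox δ l) volume := by
  refine .mk' (measurableSet_halfOpenBox δ l).nullMeasurableSet fun x => ?_
  obtain ⟨p, hp, hpx⟩ := exists_add_mem_halfOpenBox hδ l x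
  refine ⟨⟨p, hp⟩, hpx, fun q hq => ?_⟩
  have : (q : EuclideanSpace ℝ (Fin 3)) - p = 0 :=
    eq_zero_of_abs_lt_boxWidth (sub_mem q.2 hp) fun i => by
      simpa [AddSubgroup.vadd_def] using abs_sub_lt_of_mem_Ico (hq i) (hpx i)
  exact Subtype.ext (sub_eq_zero.1 this)

lemma two_lt_norm (hδ : 0 < δ) {p : EuclideanSpace ℝ (Fin 3)} (hp : p ∈ latticeΛ δ)
    (hp0 : p ≠ 0) : 2 < ‖p‖ := by
  by_contra! h
  refine hp0 (eq_zero_of_abs_lt_boxWidth hp fun i =>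
    ((PiLp.norm_apply_le p i).trans h).trans_lt ?_)
  have : 1 < √3 := by rw [Real.lt_sqrt zero_le_one]; norm_num
  fin_cases i <;> simp [boxWidth] <;> linarith

lemma pairwise_disjoint_vadd_closedBall (hδ : 0 < δ) :
    Pairwise (Disjoint on fun g : addSubgroup δ =>
      g +ᵥ closedBall (0 : EuclideanSpace ℝ (Fin 3)) 1) := by
  intro g h hgh
  simp only [onFun, AddSubgroup.vadd_def, vadd_closedBall_zero]
  apply closedBall_disjoint_closedBall
  rw [dist_eq_norm]
  exact (two_lt_norm hδ (sub_mem g.2 h.2) (sub_ne_zero.2 (Subtype.coe_injective.ne hgh))).trans_eq'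
    (by norm_num)

lemma biUnion_closedBall_eq_iUnion_vadd (δ : ℝ) :
    ⋃ p ∈ latticeΛ δ, closedBall p 1 =
      ⋃ g : addSubgroup δ, g +ᵥ closedBall (0 : EuclideanSpace ℝ (Fin 3)) 1 := by
  simp only [AddSubgroup.vadd_def, vadd_closedBall_zero, biUnion_eq_iUnion]
  rfl

end latticeΛ

/-- for `U` the union of closed unit balls centered at the points of `Λ`
and `R` the box `[l₁, l₁+4+δ] × [l₂, l₂+2√3] × [l₃, l₃+2√3]`, the volume of `R ∩ U`
equals the volume of a unit ball, `4π/3`. -/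
theorem volume_box_inter_union_balls (δ : ℝ) (hδ : 0 < δ) (l : Fin 3 → ℝ) :
    volume ({x : EuclideanSpace ℝ (Fin 3) |
        x 0 ∈ Set.Icc (l 0) (l 0 + 4 + δ) ∧
        x 1 ∈ Set.Icc (l 1) (l 1 + 2 * Real.sqrt 3) ∧
        x 2 ∈ Set.Icc (l 2) (l 2 + 2 * Real.sqrt 3)} ∩
      ⋃ p ∈ latticeΛ δ, closedBall p 1) = ENNReal.ofReal (4 * Real.pi / 3) := by
  have hbox : {x : EuclideanSpace ℝ (Fin 3) |
        x 0 ∈ Set.Icc (l 0) (l 0 + 4 + δ) ∧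
        x 1 ∈ Set.Icc (l 1) (l 1 + 2 * Real.sqrt 3) ∧
        x 2 ∈ Set.Icc (l 2) (l 2 + 2 * Real.sqrt 3)} =
      {x | ∀ i, x i ∈ Icc (l i) (l i + latticeΛ.boxWidth δ i)} := by
    ext x
    simp [Fin.forall_fin_succ, latticeΛ.boxWidth, add_assoc]
  rw [hbox, ← measure_congr (s := latticeΛ.halfOpenBox δ l ∩ _)
      ((EuclideanSpace.setOf_forall_Ico_ae_eq_Icc _ _).inter
        (ae_eq_refl (⋃ p ∈ latticeΛ δ, closedBall p 1))),
    latticeΛ.biUnion_closedBall_eq_iUnion_vadd,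
    (latticeΛ.isAddFundamentalDomain_halfOpenBox hδ l).measure_inter_iUnion_vadd
      measurableSet_closedBall.nullMeasurableSet
      ((latticeΛ.pairwise_disjoint_vadd_closedBall hδ).mono fun _ _ => Disjoint.aedisjoint),
    EuclideanSpace.volume_closedBall_fin_three, ENNReal.ofReal_one, one_pow, one_mul, mul_comm π]
end
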